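/- Fix 0<k<ω and let T be a complete first-order theory. If T is PM^(k+1), i.e. some partitioned formula φ(x;y) is PM^(k+1) in T, then T has IP_k, i.e. some partitioned formula has the k-independence property in T. -/

import Mathlib

open FirstOrder Language Set

universe u v w

/-- A partitioned formula `φ(x;y)` (object variables `α`, parameter variables `β`)
exhibits the pattern `(C, I)` (indexed by `S`) in the theory `T`. -/
def ExhibitsPattern {L : FirstOrder.Language.{u, v}} (T : L.Theory) {α β S : Type*}
    (φ : L.Formula (α ⊕ β)) (C I : Set (Set S × Set S)) : Prop :=
  ∃ (M : Theory.ModelType.{u, v, w} T) (b : S → β → M),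
    (∀ p ∈ C, ∃ a : α → M,
      (∀ i ∈ p.1, φ.Realize (Sum.elim a (b i))) ∧
      (∀ j ∈ p.2, ¬ φ.Realize (Sum.elim a (b j)))) ∧
    (∀ p ∈ I, ¬ ∃ a : α → M,
      (∀ i ∈ p.1, φ.Realize (Sum.elim a (b i))) ∧
      (∀ j ∈ p.2, ¬ φ.Realize (Sum.elim a (b j))))

/-- `(C, I)` is a pattern: the condition `(∅, ∅)` is excluded. -/
def IsPattern {S : Type*} (C I : Set (Set S × Set S)) : Prop :=
  (∅, ∅) ∉ C ∧ (∅, ∅) ∉ I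

/-- A pattern is exhibitable if some partitioned formula of some complete
first-order theory exhibits it. -/
def Exhibitable {S : Type*} (C I : Set (Set S × Set S)) : Prop :=
  ∃ (L : FirstOrder.Language.{0, 0}) (T : L.Theory) (_ : T.IsComplete) (α β : Type)
    (φ : L.Formula (α ⊕ β)), ExhibitsPattern.{0, 0, 0} T φ C I

/-- `(C, I)` is a positive pattern: every condition has the form `(X, ∅)` with `X` nonempty. -/
def IsPositivePattern {S : Type*} (C I : Set (Set S × Set S)) : Prop :=
  ∀ p ∈ C ∪ I, p.1 ≠ (∅ : Set S) ∧ p.2 = (∅ : Set S)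

/-- A positive pattern `(C, I)` is reasonable: no inconsistency condition is contained in a
consistency condition. -/
def IsReasonablePositive {S : Type*} (C I : Set (Set S × Set S)) : Prop :=
  ∀ p ∈ I, ∀ q ∈ C, ¬ p.1 ⊆ q.1

/-- `φ(x;y)` is `PM^(k)` in `T`: it exhibits every reasonable positive pattern all of whose
inconsistency conditions have size `k`. -/
def IsPMk (k : ℕ) {L : FirstOrder.Language.{u, v}} (T : L.Theory) {α β : Type*}
    (φ : L.Formula (α ⊕ β)) : Prop :=
  ∀ (n : ℕ) (C I : Set (Set (Fin n) × Set (Fin n))),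
    IsPositivePattern C I → IsReasonablePositive C I →
    (∀ p ∈ I, p.1.ncard = k) →
      ExhibitsPattern.{u, v, w} T φ C I

/-- A partitioned formula `ψ(x; y₁ … y_k)` (with `k` groups of parameter variables, each a copy
of `β`) has the `k`-independence property in `T`. -/
def HasIPk (k : ℕ) {L : FirstOrder.Language.{u, v}} (T : L.Theory) {α β : Type*}
    (ψ : L.Formula (α ⊕ (Fin k × β))) : Prop :=
  ∃ (M : Theory.ModelType.{u, v, w} T) (a : Fin k → ℕ → β → M)
    (b : Set (Fin k → ℕ) → α → M),
    ∀ (X : Set (Fin k → ℕ)) (i : Fin k → ℕ),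
      ψ.Realize (Sum.elim (b X) (fun p : Fin k × β => a p.1 (i p.1) p.2)) ↔ i ∈ X

/-!
Take a finite grid `γᵏ` and index a pattern by `(Fin k × γ) ⊕ Set (γᵏ)`: for each `X ⊆ γᵏ` and
`i ∈ γᵏ` the `(k+1)`-set `{X, (0, i 0), …, (k-1, i (k-1))}` is declared consistent when `i ∈ X`
and inconsistent otherwise. Distinct such sets are incomparable, so the pattern is reasonable and
`PM^(k+1)` realizes it. Then `ψ(y; z₁, …, z_k) := ∃x (φ(x; y) ∧ ⋀ⱼ φ(x; zⱼ))` holds of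
`(b_X; b_{(0,i 0)}, …, b_{(k-1,i (k-1))})` exactly when `i ∈ X`, so `ψ` shatters every finite
`k`-dimensional grid, and an ultraproduct of these models shatters `ℕᵏ`.
-/

variable {L : FirstOrder.Language.{u, v}} {T : L.Theory} {α β S S' : Type*}
  {φ : L.Formula (α ⊕ β)}

theorem ExhibitsPattern.of_image (f : S → S') {C I : Set (Set S × Set S)}
    (h : ExhibitsPattern.{u, v, w} T φ (Prod.map (image f) (image f) '' C)
      (Prod.map (image f) (image f) '' I)) :
    ExhibitsPattern.{u, v, w} T φ C I := by
  obtain ⟨M, b, hC, hI⟩ := h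
  refine ⟨M, b ∘ f, fun p hp => ?_, fun p hp => ?_⟩
  · obtain ⟨a, hpos, hneg⟩ := hC _ (mem_image_of_mem _ hp)
    exact ⟨a, fun i hi => hpos _ (mem_image_of_mem f hi),
      fun j hj => hneg _ (mem_image_of_mem f hj)⟩
  · rintro ⟨a, hpos, hneg⟩
    refine hI _ (mem_image_of_mem _ hp) ⟨a, ?_, ?_⟩
    · rintro _ ⟨i, hi, rfl⟩
      exact hpos i hi
    · rintro _ ⟨j, hj, rfl⟩
      exact hneg j hj

theorem IsPositivePattern.image (f : S → S') {C I : Set (Set S × Set S)}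
    (h : IsPositivePattern C I) :
    IsPositivePattern (Prod.map (image f) (image f) '' C) (Prod.map (image f) (image f) '' I) := by
  rw [IsPositivePattern, ← image_union]
  rintro _ ⟨p, hp, rfl⟩
  obtain ⟨hne, hempty⟩ := h p hp
  simpa [hempty] using hne

theorem IsReasonablePositive.image {f : S → S'} (hf : Function.Injective f)
    {C I : Set (Set S × Set S)} (h : IsReasonablePositive C I) :
    IsReasonablePositive (Prod.map (image f) (image f) '' C)
      (Prod.map (image f) (image f) '' I) := by
  rintro _ ⟨p, hp, rfl⟩ _ ⟨q, hq, rfl⟩ hpq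
  exact h p hp q hq ((image_subset_image_iff hf).1 hpq)

theorem IsPMk.exhibitsPattern {k : ℕ} (hφ : IsPMk.{u, v, w} k T φ) [Finite S]
    {C I : Set (Set S × Set S)} (hpos : IsPositivePattern C I)
    (hreas : IsReasonablePositive C I) (hsize : ∀ p ∈ I, p.1.ncard = k) :
    ExhibitsPattern.{u, v, w} T φ C I := by
  obtain ⟨n, ⟨e⟩⟩ := Finite.exists_equiv_fin S
  refine .of_image e (hφ n _ _ (hpos.image e) (hreas.image e.injective) ?_)
  rintro _ ⟨p, hp, rfl⟩
  rw [Prod.map_fst, ncard_image_of_injective _ e.injective, hsize p hp]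

section Grid

variable {k : ℕ} {γ : Type*}

def gridCell (X : Set (Fin k → γ)) (i : Fin k → γ) : Set ((Fin k × γ) ⊕ Set (Fin k → γ)) :=
  insert (.inr X) (range fun j => .inl (j, i j))

theorem gridCell_subset_gridCell {X X' : Set (Fin k → γ)} {i i' : Fin k → γ}
    (h : gridCell X i ⊆ gridCell X' i') : X = X' ∧ i = i' := by
  have hX := h (mem_insert _ _)
  simp only [gridCell, mem_insert_iff, Sum.inr.injEq, mem_range, reduceCtorEq, exists_false,
    or_false] at hX
  subst hX
  refine ⟨rfl, funext fun j => ?_⟩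
  have hj := h (mem_insert_of_mem _ ⟨j, rfl⟩)
  simp only [gridCell, mem_insert_iff, reduceCtorEq, mem_range, Sum.inl.injEq, Prod.mk.injEq,
    false_or] at hj
  obtain ⟨j', rfl, hj'⟩ := hj
  exact hj'.symm

theorem ncard_gridCell (X : Set (Fin k → γ)) (i : Fin k → γ) : (gridCell X i).ncard = k + 1 := by
  have hinj : Function.Injective fun j => (.inl (j, i j) : (Fin k × γ) ⊕ Set (Fin k → γ)) :=
    fun _ _ h => congrArg Prod.fst (Sum.inl.inj h)
  rw [gridCell, ncard_insert_of_notMem (by simp), ← image_univ, ncard_image_of_injective _ hinj,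
    ncard_univ, Nat.card_fin]

theorem IsPMk.exists_grid (hφ : IsPMk.{u, v, w} (k + 1) T φ) (γ : Type*) [Finite γ] :
    ∃ (M : Theory.ModelType.{u, v, w} T) (c : Fin k → γ → β → M) (d : Set (Fin k → γ) → β → M),
      ∀ X i, (∃ a : α → M, φ.Realize (Sum.elim a (d X)) ∧
        ∀ j, φ.Realize (Sum.elim a (c j (i j)))) ↔ i ∈ X := by
  let C : Set (Set (Fin k × γ ⊕ Set (Fin k → γ)) × Set (Fin k × γ ⊕ Set (Fin k → γ))) :=
    {p | ∃ X i, i ∈ X ∧ p = (gridCell X i, ∅)}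
  let I : Set (Set (Fin k × γ ⊕ Set (Fin k → γ)) × Set (Fin k × γ ⊕ Set (Fin k → γ))) :=
    {p | ∃ X i, i ∉ X ∧ p = (gridCell X i, ∅)}
  have hpos : IsPositivePattern C I := by
    rintro p (⟨X, i, -, rfl⟩ | ⟨X, i, -, rfl⟩) <;>
      exact ⟨(insert_nonempty _ _).ne_empty, rfl⟩
  have hreas : IsReasonablePositive C I := by
    rintro _ ⟨X, i, hi, rfl⟩ _ ⟨X', i', hi', rfl⟩ hsub
    obtain ⟨rfl, rfl⟩ := gridCell_subset_gridCell hsub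
    exact hi hi'
  obtain ⟨M, b, hC, hI⟩ := hφ.exhibitsPattern hpos hreas (by
    rintro _ ⟨X, i, -, rfl⟩
    exact ncard_gridCell X i)
  refine ⟨M, fun j g => b (.inl (j, g)), fun X => b (.inr X), fun X i => ⟨?_, fun hi => ?_⟩⟩
  · rintro ⟨a, hX, hi⟩
    by_contra hiX
    refine hI _ ⟨X, i, hiX, rfl⟩ ⟨a, ?_, by simp⟩
    rintro _ (rfl | ⟨j, rfl⟩)
    exacts [hX, hi j]
  · obtain ⟨a, ha, -⟩ := hC _ ⟨X, i, hi, rfl⟩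
    exact ⟨a, ha _ (mem_insert _ _), fun j => ha _ (mem_insert_of_mem _ ⟨j, rfl⟩)⟩

end Grid

theorem FirstOrder.Language.Formula.exists_finset_realize_iff (φ : L.Formula (α ⊕ β)) :
    ∃ (t : Finset α) (φ' : L.Formula (t ⊕ β)), ∀ {M : Type*} [L.Structure M] (a : α → M)
      (b : β → M), φ'.Realize (Sum.elim (a ∘ (↑)) b) ↔ φ.Realize (Sum.elim a b) := by
  classical
  refine ⟨φ.freeVarFinset.toLeft, φ.restrictFreeVar fun x => Sum.casesOn (motive :=
    fun y => y ∈ φ.freeVarFinset → _) x.1 (fun x hx => .inl ⟨x, by simpa using hx⟩)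
    (fun y _ => .inr y) x.2, fun a b => ?_⟩
  refine BoundedFormula.realize_restrictFreeVar _ fun ⟨x, hx⟩ => ?_
  cases x <;> rfl

theorem FirstOrder.Language.Formula.exists_realize_iff_exists_common (φ : L.Formula (α ⊕ β))
    (ι : Type*) [Finite ι] :
    ∃ ψ : L.Formula (β ⊕ (ι × β)), ∀ {M : Type*} [L.Structure M] [Nonempty M] (d : β → M)
      (c : ι → β → M), ψ.Realize (Sum.elim d fun p => c p.1 p.2) ↔
        ∃ a : α → M, φ.Realize (Sum.elim a d) ∧ ∀ j, φ.Realize (Sum.elim a (c j)) := by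
  obtain ⟨t, φ', hφ'⟩ := φ.exists_finset_realize_iff
  let param : Option ι → β → β ⊕ (ι × β) := fun o => o.elim Sum.inl fun j v => .inr (j, v)
  refine ⟨(Formula.iInf fun o => φ'.relabel (Sum.elim Sum.inr fun v => .inl (param o v))).iExs t,
    fun d c => ?_⟩
  rw [Formula.realize_iExs, (Subtype.val_injective.surjective_comp_right).exists]
  refine exists_congr fun a => ?_
  rw [Formula.realize_iInf, Option.forall]
  simp only [Formula.realize_relabel, Sum.comp_elim, Sum.elim_comp_inr]
  exact and_congr (hφ' a d) (forall_congr' fun j => hφ' a (c j))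

def ShattersGrid (k : ℕ) (γ : Type*) (T : L.Theory) (ψ : L.Formula (α ⊕ (Fin k × β))) : Prop :=
  ∃ (M : Theory.ModelType.{u, v, w} T) (a : Fin k → γ → β → M) (b : Set (Fin k → γ) → α → M),
    ∀ (X : Set (Fin k → γ)) (i : Fin k → γ),
      ψ.Realize (Sum.elim (b X) fun p : Fin k × β => a p.1 (i p.1) p.2) ↔ i ∈ X

instance FirstOrder.Language.Ultraproduct.isModel {ι : Type*} (U : Ultrafilter ι)
    (M : ι → Theory.ModelType.{u, v, w} T) : (U : Filter ι).Product (fun i => M i) ⊨ T :=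
  ⟨fun σ hσ => (Ultraproduct.sentence_realize σ).2
    (.of_forall fun i => (M i).is_model.realize_of_mem σ hσ)⟩

theorem hasIPk_of_forall_shattersGrid {k : ℕ} {ψ : L.Formula (α ⊕ (Fin k × β))}
    (h : ∀ N, ShattersGrid.{u, v, w} k (Fin N) T ψ) : HasIPk.{u, v, w} k T ψ := by
  choose M a b hM using fun N => h (N + 1)
  let U : Ultrafilter ℕ := Filter.hyperfilter ℕ
  let Mω := (U : Filter ℕ).Product fun N => M N
  let restrict (X : Set (Fin k → ℕ)) (N : ℕ) : Set (Fin k → Fin (N + 1)) :=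
    {g | (fun j => (g j : ℕ)) ∈ X}
  let val (X : Set (Fin k → ℕ)) (i : Fin k → ℕ) (r : α ⊕ (Fin k × β)) (N : ℕ) : M N :=
    Sum.elim (b N (restrict X N)) (fun p => a N p.1 (Fin.ofNat (N + 1) (i p.1)) p.2) r
  refine ⟨.of T Mω, fun j t v => ((fun N => a N j (Fin.ofNat (N + 1) t) v : ∀ N, M N) : Mω),
    fun X v => ((fun N => b N (restrict X N) v : ∀ N, M N) : Mω),
    fun X i => ?_⟩
  refine .trans ?_ ((Ultraproduct.realize_formula_cast (u := U) ψ (val X i)).trans ?_)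
  · exact iff_of_eq (congrArg _ (funext fun r => by cases r <;> rfl))
  -- Only the factors with `N ≥ i j` for all `j` matter, and there `Fin.ofNat (N + 1)` does not
  -- truncate `i`.
  have hlarge : ∀ᶠ N in (U : Filter ℕ), ∀ j, i j < N + 1 := Nat.hyperfilter_le_atTop <|
    Filter.eventually_all.2 fun j =>
      (Filter.eventually_ge_atTop (i j)).mono fun _ => Nat.lt_succ_of_le
  refine (Filter.eventually_congr (hlarge.mono fun N hN => ?_)).trans Filter.eventually_const
  rw [hM N (restrict X N) fun j => Fin.ofNat (N + 1) (i j)]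
  simp [restrict, Nat.mod_eq_of_lt (hN _)]

theorem PMk_succ_implies_IPk_general
    (k : ℕ)
    {L : FirstOrder.Language.{u, v}} (T : L.Theory)
    (h : ∃ (α β : Type w) (φ : L.Formula (α ⊕ β)), IsPMk.{u, v, w} (k + 1) T φ) :
    ∃ (α β : Type w) (ψ : L.Formula (α ⊕ (Fin k × β))), HasIPk.{u, v, w} k T ψ := by
  obtain ⟨α, β, φ, hφ⟩ := h
  obtain ⟨ψ, hψ⟩ := φ.exists_realize_iff_exists_common (Fin k)
  refine ⟨β, β, ψ, hasIPk_of_forall_shattersGrid fun N => ?_⟩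
  obtain ⟨M, c, d, hM⟩ := hφ.exists_grid (Fin N)
  exact ⟨M, c, d, fun X i => (hψ (d X) fun j => c j (i j)).trans (hM X i)⟩

/-- for `0 < k < ω`, if the complete theory `T` is `PM^(k+1)` (some partitioned
formula is `PM^(k+1)` in `T`), then `T` has `IP_k` (some partitioned formula has the
`k`-independence property in `T`). -/
theorem PMk_succ_implies_IPk
    (k : ℕ) (hk : 0 < k)
    {L : FirstOrder.Language.{u, v}} (T : L.Theory) (hT : T.IsComplete)
    (h : ∃ (α β : Type w) (φ : L.Formula (α ⊕ β)), IsPMk.{u, v, w} (k + 1) T φ) :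
    ∃ (α β : Type w) (ψ : L.Formula (α ⊕ (Fin k × β))), HasIPk.{u, v, w} k T ψ :=
  PMk_succ_implies_IPk_general k T h
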